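/- arXiv:1506.05639 — 3 statements merged into one kernel-verified Lean document; each statement's English description precedes it below -/
import Mathlib

section
/- Let N_T ≥ 1 and d ≥ 1 be integers and Δt a nonzero real number. Let 𝔸_1, …, 𝔸_{N_T}, B, 𝕄 be d×d complex matrices, let u_0 ∈ ℂ^d, v_1, …, v_{N_T} ∈ ℂ^d and c_1, …, c_{N_T} ∈ ℂ^d, and define u_n = 2·v_n − u_{n−1} for 1 ≤ n ≤ N_T. Then the following are equivalent: (a) for every 1 ≤ n ≤ N_T, (𝔸_n − B)·v_n = (2i/Δt)·𝕄·u_{n−1} + c_n; (b) the stacked vector v = (v_1, …, v_{N_T}) ∈ ℂ^{N_T·d} satisfies (𝐀 − 𝐁)·v = F + c, where 𝐀 is the N_T×N_T block matrix with d×d blocks whose (n,n) block is 𝔸_n, whose (n,s) block for s < n is (−1)^{n−s}·(4i/Δt)·𝕄, and whose blocks above the diagonal are zero; 𝐁 = blockdiag_{N_T}(B); F is the stacked vector whose n-th component is (−1)^{n−1}·(2i/Δt)·𝕄·u_0; and c = (c_1, …, c_{N_T}). -/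
open Matrix Complex

/-- Global-in-time reformulation of the Crank–Nicolson time steps with Robin
transmission condition: the per-step systems `(𝔸ₙ - B) vₙ = (2i/Δt) 𝕄 u_{n-1} + cₙ`
(where `uₙ = 2 vₙ - u_{n-1}`) hold for all `n` iff the stacked vector `v` solves
`(𝐀 - 𝐁) v = F + c` with `𝐀` the block lower triangular matrix with diagonal blocks
`𝔸ₙ` and subdiagonal blocks `(-1)^(n-s) (4i/Δt) 𝕄`, `𝐁 = blockdiag(B)` and
`F` with `n`-th component `(-1)^(n-1) (2i/Δt) 𝕄 u₀`.
Here `n : Fin N_T` labels the time step `n+1` (1-based), so `u n.val` is `u_{n-1}`. -/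
theorem global_in_time_robin (N_T d : ℕ) (hNT : 1 ≤ N_T) (hd : 1 ≤ d)
    (Δt : ℝ) (hΔt : Δt ≠ 0)
    (𝔸 : Fin N_T → Matrix (Fin d) (Fin d) ℂ)
    (B 𝕄 : Matrix (Fin d) (Fin d) ℂ)
    (u₀ : Fin d → ℂ) (v c : Fin N_T → Fin d → ℂ)
    (u : ℕ → Fin d → ℂ) (hu0 : u 0 = u₀)
    (hu : ∀ n : Fin N_T, u ((n : ℕ) + 1) = (2 : ℂ) • v n - u (n : ℕ)) :
    (∀ n : Fin N_T,
        (𝔸 n - B) *ᵥ v n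
          = (2 * Complex.I / (Δt : ℂ)) • (𝕄 *ᵥ u (n : ℕ)) + c n)
    ↔ ((fun x y => if x.1 = y.1 then 𝔸 x.1 x.2 y.2
          else if y.1 < x.1 then
            (-1 : ℂ) ^ ((x.1 : ℕ) - (y.1 : ℕ)) * (4 * Complex.I / (Δt : ℂ)) * 𝕄 x.2 y.2
          else 0 : Matrix (Fin N_T × Fin d) (Fin N_T × Fin d) ℂ)
        - (fun x y => if x.1 = y.1 then B x.2 y.2 else 0 :
            Matrix (Fin N_T × Fin d) (Fin N_T × Fin d) ℂ))
        *ᵥ (fun x : Fin N_T × Fin d => v x.1 x.2)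
      = (fun x : Fin N_T × Fin d =>
          (-1 : ℂ) ^ (x.1 : ℕ) * (2 * Complex.I / (Δt : ℂ)) * (𝕄 *ᵥ u₀) x.2)
        + (fun x : Fin N_T × Fin d => c x.1 x.2) := by
  classical
  set Mv : ℕ → Fin d → ℂ := fun k i => if h : k < N_T then (𝕄 *ᵥ v ⟨k, h⟩) i else 0 with hMv
  have key : ∀ n : ℕ, n ≤ N_T → ∀ i : Fin d,
      (𝕄 *ᵥ u n) i = (-1 : ℂ) ^ n * (𝕄 *ᵥ u₀) i
        - ∑ k ∈ Finset.range n, 2 * (-1 : ℂ) ^ (n - k) * Mv k i := by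
    intro n
    induction n with
    | zero => intro _ i; simp [hu0]
    | succ m ih =>
      intro hm i
      have hmlt : m < N_T := hm
      have h1 := hu ⟨m, hmlt⟩
      have h2 : (𝕄 *ᵥ u (m + 1)) i
          = 2 * (𝕄 *ᵥ v ⟨m, hmlt⟩) i - (𝕄 *ᵥ u m) i := by
        simp only [Fin.val_mk] at h1
        rw [h1, Matrix.mulVec_sub, Matrix.mulVec_smul]
        simp [smul_eq_mul]
      rw [h2, ih (le_of_lt hmlt) i, Finset.sum_range_succ]
      have h3 : ∀ k ∈ Finset.range m,
          2 * (-1 : ℂ) ^ (m + 1 - k) * Mv k i = -(2 * (-1 : ℂ) ^ (m - k) * Mv k i) := by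
        intro k hk
        have hk' : m + 1 - k = (m - k) + 1 := by
          simp only [Finset.mem_range] at hk; omega
        rw [hk', pow_succ]; ring
      rw [Finset.sum_congr rfl h3]
      have hMvm : Mv m i = (𝕄 *ᵥ v ⟨m, hmlt⟩) i := by
        simp [hMv, hmlt]
      rw [hMvm, pow_succ]
      simp [Finset.sum_neg_distrib]
      ring
  simp only [funext_iff, Prod.forall, Pi.add_apply, Pi.smul_apply, smul_eq_mul]
  refine forall_congr' fun n => forall_congr' fun i => ?_
  -- compute the big row
  have hrow : (((fun x y => if x.1 = y.1 then 𝔸 x.1 x.2 y.2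
          else if y.1 < x.1 then
            (-1 : ℂ) ^ ((x.1 : ℕ) - (y.1 : ℕ)) * (4 * Complex.I / (Δt : ℂ)) * 𝕄 x.2 y.2
          else 0 : Matrix (Fin N_T × Fin d) (Fin N_T × Fin d) ℂ)
        - (fun x y => if x.1 = y.1 then B x.2 y.2 else 0 :
            Matrix (Fin N_T × Fin d) (Fin N_T × Fin d) ℂ))
        *ᵥ (fun x : Fin N_T × Fin d => v x.1 x.2)) (n, i)
      = ((𝔸 n - B) *ᵥ v n) i
        + ∑ k ∈ Finset.range (n : ℕ),
            (-1 : ℂ) ^ ((n : ℕ) - k) * (4 * Complex.I / (Δt : ℂ)) * Mv k i := by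
    simp only [Matrix.mulVec, dotProduct]
    rw [Fintype.sum_prod_type]
    have hT : ∀ s : Fin N_T,
        (∑ j : Fin d, (((fun x y => if x.1 = y.1 then 𝔸 x.1 x.2 y.2
          else if y.1 < x.1 then
            (-1 : ℂ) ^ ((x.1 : ℕ) - (y.1 : ℕ)) * (4 * Complex.I / (Δt : ℂ)) * 𝕄 x.2 y.2
          else 0 : Matrix (Fin N_T × Fin d) (Fin N_T × Fin d) ℂ)
        - (fun x y => if x.1 = y.1 then B x.2 y.2 else 0 :
            Matrix (Fin N_T × Fin d) (Fin N_T × Fin d) ℂ)) (n, i) (s, j)) * v s j)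
        = (if n = s then ((𝔸 n - B) *ᵥ v n) i else 0)
          + (if s < n then (-1 : ℂ) ^ ((n : ℕ) - (s : ℕ)) * (4 * Complex.I / (Δt : ℂ))
              * (𝕄 *ᵥ v s) i else 0) := by
      intro s
      by_cases hns : n = s
      · subst hns
        simp [Matrix.sub_apply, Matrix.mulVec, dotProduct, sub_mul,
          Matrix.sub_apply, lt_irrefl, Finset.sum_sub_distrib]
      · by_cases hsn : s < n
        · simp [Matrix.sub_apply, hns, hsn, Matrix.mulVec, dotProduct,
            Finset.mul_sum, mul_assoc]
        · simp [Matrix.sub_apply, hns, hsn]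
    rw [Finset.sum_congr rfl fun s _ => hT s, Finset.sum_add_distrib, Finset.sum_ite_eq]
    simp only [Finset.mem_univ, if_true]
    congr 1
    have hfin : (∑ s : Fin N_T, (if s < n then (-1 : ℂ) ^ ((n : ℕ) - (s : ℕ))
          * (4 * Complex.I / (Δt : ℂ)) * (𝕄 *ᵥ v s) i else 0))
        = ∑ k ∈ Finset.range N_T, (if k < (n : ℕ) then (-1 : ℂ) ^ ((n : ℕ) - k)
          * (4 * Complex.I / (Δt : ℂ)) * Mv k i else 0) := by
      rw [← Fin.sum_univ_eq_sum_range]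
      refine Finset.sum_congr rfl fun s _ => ?_
      by_cases hsn : s < n
      · rw [if_pos hsn, if_pos (by exact_mod_cast hsn)]
        simp [hMv, s.isLt]
      · rw [if_neg hsn, if_neg (by exact_mod_cast hsn)]
    rw [hfin, ← Finset.sum_subset (Finset.range_subset_range.mpr (le_of_lt n.isLt))]
    · exact Finset.sum_congr rfl fun k hk => if_pos (Finset.mem_range.mp hk)
    · intro k _ hk
      exact if_neg fun h => hk (Finset.mem_range.mpr h)
  rw [hrow, key (n : ℕ) (le_of_lt n.isLt) i]
  have hS : ∑ k ∈ Finset.range (n : ℕ),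
        (-1 : ℂ) ^ ((n : ℕ) - k) * (4 * Complex.I / (Δt : ℂ)) * Mv k i
      = (2 * Complex.I / (Δt : ℂ))
        * ∑ k ∈ Finset.range (n : ℕ), 2 * (-1 : ℂ) ^ ((n : ℕ) - k) * Mv k i := by
    rw [Finset.mul_sum]
    exact Finset.sum_congr rfl fun k _ => by ring
  rw [hS]
  constructor <;> intro h <;> linear_combination h
end

section
/- Let N_T ≥ 1 and d ≥ 1 be integers, Δt a nonzero real number and c_a ∈ ℂ. Let 𝔸_1, …, 𝔸_{N_T}, 𝕄, M^Γ be d×d complex matrices, and let Y^{n,p} be d×d complex matrices for 1 ≤ p ≤ n ≤ N_T. Let u_0 ∈ ℂ^d, v_1, …, v_{N_T} ∈ ℂ^d, c_1, …, c_{N_T} ∈ ℂ^d, and define u_n = 2·v_n − u_{n−1} for 1 ≤ n ≤ N_T. Then the following are equivalent: (a) for every 1 ≤ n ≤ N_T, (𝔸_n + c_a·M^Γ)·v_n + ∑_{p=1}^{n} Y^{n,p}·v_p = (2i/Δt)·𝕄·u_{n−1} + c_n; (b) the stacked vector v = (v_1, …, v_{N_T}) satisfies (𝐀 − 𝐁)·v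 = F + c, where 𝐀 is the N_T×N_T block matrix with (n,n) block 𝔸_n, (n,s) block (−1)^{n−s}·(4i/Δt)·𝕄 for s < n and zero blocks above the diagonal, F has n-th component (−1)^{n−1}·(2i/Δt)·𝕄·u_0, c = (c_1, …, c_{N_T}), and 𝐁 is the block lower triangular N_T×N_T block matrix whose (n,n) block is −(c_a·M^Γ + Y^{n,n}), whose (n,p) block for p < n is −Y^{n,p}, and whose blocks above the diagonal are zero. -/
/-!
Row `n` of `(𝐀 - 𝐁) v` is the left-hand side of time step `n` plus the memory term
`∑_{s<n} (-1)^(n-s) (4i/Δt) 𝕄 v_s` coming from the subdiagonal blocks of `𝐀`. Unrolling the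
reflection recurrence `u_{n+1} = 2 v_n - u_n` gives `u_n + ∑_{s<n} 2 (-1)^(n-s) v_s = (-1)^n u_0`,
so adding the same memory term to the right-hand side `(2i/Δt) 𝕄 u_n + c_n` of step `n` turns it
into `F_n + c_n`. Hence the two systems differ row by row by the same vector.
-/

open Matrix Complex Finset

namespace Matrix

def blockLowerTriangular {ι m n R : Type*} [LinearOrder ι] [Zero R] (D : ι → Matrix m n R)
    (L : ι → ι → Matrix m n R) : Matrix (ι × m) (ι × n) R :=
  of fun x y => if x.1 = y.1 then D x.1 x.2 y.2 else if y.1 < x.1 then L x.1 y.1 x.2 y.2 else 0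

theorem blockLowerTriangular_mulVec_apply {ι m n R : Type*} [LinearOrder ι] [Fintype ι]
    [LocallyFiniteOrderBot ι] [Fintype n] [NonUnitalNonAssocSemiring R]
    (D : ι → Matrix m n R) (L : ι → ι → Matrix m n R) (w : ι → n → R) (i : ι) (a : m) :
    (blockLowerTriangular D L *ᵥ fun y => w y.1 y.2) (i, a) =
      (D i *ᵥ w i + ∑ s ∈ Iio i, L i s *ᵥ w s) a := by
  have hblock : ∀ s, ∑ b, blockLowerTriangular D L (i, a) (s, b) * w s b =
      (if i = s then (D i *ᵥ w i) a else 0) + (if s < i then (L i s *ᵥ w s) a else 0) := by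
    intro s
    unfold blockLowerTriangular
    rcases lt_trichotomy s i with hlt | rfl | hgt
    · simp [hlt.ne', hlt, mulVec, dotProduct]
    · simp [mulVec, dotProduct]
    · simp [hgt.ne, hgt.not_gt]
  rw [mulVec, dotProduct, Fintype.sum_prod_type, Fintype.sum_congr _ _ hblock, sum_add_distrib,
    sum_ite_eq, if_pos (mem_univ i), ← sum_filter, filter_gt_eq_Iio, Pi.add_apply,
    Finset.sum_apply]

end Matrix

theorem Fin.sum_Iio_val_eq_sum_range {M : Type*} [AddCommMonoid M] {N : ℕ} (n : Fin N)
    (f : ℕ → M) : ∑ s ∈ Iio n, f s = ∑ s ∈ range n, f s := by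
  rw [← Nat.Iio_eq_range, ← Fin.map_valEmbedding_Iio, sum_map]
  rfl

section Reflection

variable {R V : Type*} [Ring R] [AddCommGroup V] [Module R V]

theorem add_sum_range_eq_neg_one_pow_smul {N : ℕ} (u w : ℕ → V)
    (hu : ∀ n < N, u (n + 1) = (2 : R) • w n - u n) :
    ∀ n ≤ N, u n + ∑ s ∈ range n, ((-1 : R) ^ (n - s) * 2) • w s = (-1 : R) ^ n • u 0
  | 0, _ => by simp
  | n + 1, hn => by
    have ih := add_sum_range_eq_neg_one_pow_smul u w hu n (by omega)
    have hshift : ∀ s ∈ range n, ((-1 : R) ^ (n + 1 - s) * 2) • w s =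
        -(((-1 : R) ^ (n - s) * 2) • w s) := by
      intro s hs
      rw [Nat.sub_add_comm (mem_range.1 hs).le, pow_succ, mul_neg_one, neg_mul, neg_smul]
    rw [hu n (by omega), sum_range_succ, sum_congr rfl hshift, sum_neg_distrib, pow_succ,
      mul_neg_one, neg_smul, ← ih, Nat.add_sub_cancel_left, pow_one, neg_one_mul, neg_smul]
    abel

theorem add_sum_Iio_eq_neg_one_pow_smul {N : ℕ} (v : Fin N → V) (u : ℕ → V)
    (hu : ∀ n : Fin N, u (n + 1) = (2 : R) • v n - u n) (n : Fin N) :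
    u n + ∑ s ∈ Iio n, ((-1 : R) ^ ((n : ℕ) - s) * 2) • v s = (-1 : R) ^ (n : ℕ) • u 0 := by
  set w : ℕ → V := fun s => if h : s < N then v ⟨s, h⟩ else 0
  have hvw : ∀ s : Fin N, v s = w s := fun s => by simp [w]
  have hw : ∀ m < N, u (m + 1) = (2 : R) • w m - u m := fun m hm => by
    simpa [w, hm] using hu ⟨m, hm⟩
  simp_rw [hvw, Fin.sum_Iio_val_eq_sum_range n fun s => ((-1 : R) ^ ((n : ℕ) - s) * 2) • w s]
  exact add_sum_range_eq_neg_one_pow_smul u w hw n n.isLt.le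

end Reflection

/-- Time steps are 0-based: `n : Fin N_T` is step `n + 1` of the paper, so `u n` is `u_{n-1}`
and `∑_{p=1}^n` is the sum over `Iic n`. -/
theorem global_in_time_pade_general (N_T d : ℕ) 
    (Δt : ℝ) (c_a : ℂ)
    (𝔸 : Fin N_T → Matrix (Fin d) (Fin d) ℂ)
    (𝕄 MΓ : Matrix (Fin d) (Fin d) ℂ)
    (Y : Fin N_T → Fin N_T → Matrix (Fin d) (Fin d) ℂ)
    (u₀ : Fin d → ℂ) (v c : Fin N_T → Fin d → ℂ)
    (u : ℕ → Fin d → ℂ) (hu0 : u 0 = u₀)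
    (hu : ∀ n : Fin N_T, u ((n : ℕ) + 1) = (2 : ℂ) • v n - u (n : ℕ)) :
    (∀ n : Fin N_T,
        (𝔸 n + c_a • MΓ) *ᵥ v n + ∑ p ∈ Finset.Iic n, (Y n p) *ᵥ v p
          = (2 * Complex.I / (Δt : ℂ)) • (𝕄 *ᵥ u (n : ℕ)) + c n)
    ↔ ((fun x y => if x.1 = y.1 then 𝔸 x.1 x.2 y.2
          else if y.1 < x.1 then
            (-1 : ℂ) ^ ((x.1 : ℕ) - (y.1 : ℕ)) * (4 * Complex.I / (Δt : ℂ)) * 𝕄 x.2 y.2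
          else 0 : Matrix (Fin N_T × Fin d) (Fin N_T × Fin d) ℂ)
        - (fun x y => if x.1 = y.1 then (-(c_a • MΓ + Y x.1 x.1)) x.2 y.2
            else if y.1 < x.1 then (-(Y x.1 y.1)) x.2 y.2
            else 0 : Matrix (Fin N_T × Fin d) (Fin N_T × Fin d) ℂ))
        *ᵥ (fun x : Fin N_T × Fin d => v x.1 x.2)
      = (fun x : Fin N_T × Fin d =>
          (-1 : ℂ) ^ (x.1 : ℕ) * (2 * Complex.I / (Δt : ℂ)) * (𝕄 *ᵥ u₀) x.2)
        + (fun x : Fin N_T × Fin d => c x.1 x.2) := by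
  set r : ℂ := 2 * I / Δt with hr
  set L : Fin N_T → Fin N_T → Matrix (Fin d) (Fin d) ℂ :=
    fun n s => ((-1 : ℂ) ^ ((n : ℕ) - (s : ℕ)) * (4 * I / Δt)) • 𝕄
  have hmemory : ∀ n : Fin N_T, r • (𝕄 *ᵥ u n) + ∑ s ∈ Iio n, L n s *ᵥ v s =
      ((-1 : ℂ) ^ (n : ℕ) * r) • (𝕄 *ᵥ u₀) := fun n =>
    calc r • (𝕄 *ᵥ u n) + ∑ s ∈ Iio n, L n s *ᵥ v s
        = r • 𝕄 *ᵥ (u n + ∑ s ∈ Iio n, ((-1 : ℂ) ^ ((n : ℕ) - s) * 2) • v s) := by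
          simp only [L, mulVec_add, mulVec_sum, mulVec_smul, smul_mulVec, smul_add, smul_sum,
            smul_smul, hr]
          ring_nf
      _ = ((-1 : ℂ) ^ (n : ℕ) * r) • (𝕄 *ᵥ u₀) := by
          rw [add_sum_Iio_eq_neg_one_pow_smul v u hu n, hu0, mulVec_smul, smul_smul, mul_comm]
  change _ ↔ (blockLowerTriangular 𝔸 L
      - blockLowerTriangular (fun n => -(c_a • MΓ + Y n n)) (fun n s => -Y n s)) *ᵥ
        (fun x => v x.1 x.2) = _
  rw [sub_mulVec, funext_iff, Prod.forall]
  refine forall_congr' fun n => ?_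
  rw [← add_left_inj (∑ s ∈ Iio n, L n s *ᵥ v s), add_right_comm _ (c n), hmemory, funext_iff]
  refine forall_congr' fun j => Iff.of_eq (congrArg₂ _ ?_ rfl)
  rw [Pi.sub_apply, blockLowerTriangular_mulVec_apply, blockLowerTriangular_mulVec_apply,
    ← Pi.sub_apply, ← add_sum_Iio_eq_sum_Iic]
  refine congrFun ?_ j
  simp only [add_mulVec, neg_mulVec, sum_neg_distrib]
  abel

/-- Global-in-time reformulation of the Crank–Nicolson time steps with the
Padé transmission condition `S_pade^m`: the per-step systems
`(𝔸ₙ + c_a M^Γ) vₙ + ∑_{p=1}^n Y^{n,p} v_p = (2i/Δt) 𝕄 u_{n-1} + cₙ`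
(where `uₙ = 2 vₙ - u_{n-1}`) hold for all `n` iff the stacked vector `v` solves
`(𝐀 - 𝐁) v = F + c`, where `𝐀` has diagonal blocks `𝔸ₙ` and subdiagonal blocks
`(-1)^(n-s) (4i/Δt) 𝕄`, `F` has `n`-th component `(-1)^(n-1) (2i/Δt) 𝕄 u₀`, and
`𝐁` is block lower triangular with `(n,n)` block `-(c_a M^Γ + Y^{n,n})` and
`(n,p)` block `-Y^{n,p}` for `p < n`.
Here `n : Fin N_T` labels the time step `n+1` (1-based), so `u n.val` is `u_{n-1}`,
and the sum `∑_{p=1}^n` becomes a sum over `p ∈ Finset.Iic n`. -/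
theorem global_in_time_pade (N_T d : ℕ) (hNT : 1 ≤ N_T) (hd : 1 ≤ d)
    (Δt : ℝ) (hΔt : Δt ≠ 0) (c_a : ℂ)
    (𝔸 : Fin N_T → Matrix (Fin d) (Fin d) ℂ)
    (𝕄 MΓ : Matrix (Fin d) (Fin d) ℂ)
    (Y : Fin N_T → Fin N_T → Matrix (Fin d) (Fin d) ℂ)
    (u₀ : Fin d → ℂ) (v c : Fin N_T → Fin d → ℂ)
    (u : ℕ → Fin d → ℂ) (hu0 : u 0 = u₀)
    (hu : ∀ n : Fin N_T, u ((n : ℕ) + 1) = (2 : ℂ) • v n - u (n : ℕ)) :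
    (∀ n : Fin N_T,
        (𝔸 n + c_a • MΓ) *ᵥ v n + ∑ p ∈ Finset.Iic n, (Y n p) *ᵥ v p
          = (2 * Complex.I / (Δt : ℂ)) • (𝕄 *ᵥ u (n : ℕ)) + c n)
    ↔ ((fun x y => if x.1 = y.1 then 𝔸 x.1 x.2 y.2
          else if y.1 < x.1 then
            (-1 : ℂ) ^ ((x.1 : ℕ) - (y.1 : ℕ)) * (4 * Complex.I / (Δt : ℂ)) * 𝕄 x.2 y.2
          else 0 : Matrix (Fin N_T × Fin d) (Fin N_T × Fin d) ℂ)
        - (fun x y => if x.1 = y.1 then (-(c_a • MΓ + Y x.1 x.1)) x.2 y.2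
            else if y.1 < x.1 then (-(Y x.1 y.1)) x.2 y.2
            else 0 : Matrix (Fin N_T × Fin d) (Fin N_T × Fin d) ℂ))
        *ᵥ (fun x : Fin N_T × Fin d => v x.1 x.2)
      = (fun x : Fin N_T × Fin d =>
          (-1 : ℂ) ^ (x.1 : ℕ) * (2 * Complex.I / (Δt : ℂ)) * (𝕄 *ᵥ u₀) x.2)
        + (fun x : Fin N_T × Fin d => c x.1 x.2) :=
  global_in_time_pade_general N_T d Δt c_a 𝔸 𝕄 MΓ Y u₀ v c u hu0 hu
end

section
/- Let N, a, d ≥ 1 be integers and α ∈ ℂ. Let G be an N×N block matrix with d×d complex blocks that is block lower triangular, block Toeplitz and invertible; let S be an N×N block matrix with d×d complex blocks that is block lower triangular and block Toeplitz; let P be an a×d complex matrix, M a d×d complex matrix and R a d×a complex matrix. Then X := α·I + blockdiag_N(P)·S·G^{−1}·blockdiag_N(M)·blockdiag_N(R), viewed as an N×N block matrix with a×a blocks x_{n,s}, is block lower triangular and satisfies x_{n,s} = x_{n−1,s−1} for all 2 ≤ s ≤ n ≤ N. -/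
open Matrix
open Finset

/-- An `N×N` block matrix with `a×b` blocks is block lower triangular if all
blocks strictly above the diagonal vanish. -/
def IsBlockLowerTriangular {N a b : ℕ}
    (X : Matrix (Fin N × Fin a) (Fin N × Fin b) ℂ) : Prop :=
  ∀ (n s : Fin N) (i : Fin a) (j : Fin b), n < s → X (n, i) (s, j) = 0

/-- An `N×N` block matrix with `a×b` blocks is block Toeplitz if
`x_{n,s} = x_{n-1,s-1}` for all `2 ≤ n, s ≤ N` (here 0-based: `1 ≤ n, s`). -/
def IsBlockToeplitz {N a b : ℕ}
    (X : Matrix (Fin N × Fin a) (Fin N × Fin b) ℂ) : Prop :=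
  ∀ (n s : Fin N) (i : Fin a) (j : Fin b), 1 ≤ (n : ℕ) → 1 ≤ (s : ℕ) →
    X (n, i) (s, j)
      = X (⟨(n : ℕ) - 1, Nat.lt_of_le_of_lt (Nat.sub_le _ _) n.isLt⟩, i)
          (⟨(s : ℕ) - 1, Nat.lt_of_le_of_lt (Nat.sub_le _ _) s.isLt⟩, j)

/-- The `N×N` block diagonal matrix all of whose diagonal blocks equal `P`. -/
def blockdiag (N : ℕ) {a b : ℕ} (P : Matrix (Fin a) (Fin b) ℂ) :
    Matrix (Fin N × Fin a) (Fin N × Fin b) ℂ :=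
  fun x y => if x.1 = y.1 then P x.2 y.2 else 0

/-- LTT form: block lower triangular and Toeplitz, with blocks given by `f`. -/
def LTTForm {N a b : ℕ} (X : Matrix (Fin N × Fin a) (Fin N × Fin b) ℂ)
    (f : ℕ → Matrix (Fin a) (Fin b) ℂ) : Prop :=
  ∀ (n s : Fin N) (i : Fin a) (j : Fin b),
    X (n, i) (s, j) = if (s : ℕ) ≤ (n : ℕ) then f ((n : ℕ) - s) i j else 0

lemma conv_sum {N : ℕ} (s n : ℕ) (hs : s ≤ n) (hn : n < N) (F : ℕ → ℕ → ℂ) :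
    ∑ m : Fin N, (if s ≤ (m : ℕ) ∧ (m : ℕ) ≤ n then F (n - m) (m - s) else 0)
      = ∑ t ∈ range (n - s + 1), F (n - s - t) t := by
  rw [Fin.sum_univ_eq_sum_range (fun m => if s ≤ m ∧ m ≤ n then F (n - m) (m - s) else 0)]
  rw [← Finset.sum_filter]
  have hset : (range N).filter (fun m => s ≤ m ∧ m ≤ n)
      = (range (n - s + 1)).image (· + s) := by
    ext m
    simp only [Finset.mem_filter, Finset.mem_range, Finset.mem_image]
    constructor
    · rintro ⟨_, h1, h2⟩
      exact ⟨m - s, by omega, by omega⟩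
    · rintro ⟨t, ht, rfl⟩
      omega
  rw [hset, Finset.sum_image (by intro x _ y _ h; simp only at h; omega)]
  apply Finset.sum_congr rfl
  intro t ht
  simp only [Finset.mem_range] at ht
  congr 1 <;> omega

lemma LTTForm.mul {N a b c : ℕ} {X : Matrix (Fin N × Fin a) (Fin N × Fin b) ℂ}
    {Y : Matrix (Fin N × Fin b) (Fin N × Fin c) ℂ}
    {f : ℕ → Matrix (Fin a) (Fin b) ℂ} {g : ℕ → Matrix (Fin b) (Fin c) ℂ}
    (hX : LTTForm X f) (hY : LTTForm Y g) :
    LTTForm (X * Y) (fun k => ∑ t ∈ range (k + 1), f (k - t) * g t) := by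
  intro n s i j
  rw [Matrix.mul_apply]
  rw [Fintype.sum_prod_type]
  have key : ∀ m : Fin N, ∑ l : Fin b, X (n, i) (m, l) * Y (m, l) (s, j)
      = if (s : ℕ) ≤ (m : ℕ) ∧ (m : ℕ) ≤ (n : ℕ)
          then (f ((n : ℕ) - m) * g ((m : ℕ) - s)) i j else 0 := by
    intro m
    by_cases h1 : (m : ℕ) ≤ (n : ℕ) <;> by_cases h2 : (s : ℕ) ≤ (m : ℕ) <;>
      simp [hX n m, hY m s, h1, h2, Matrix.mul_apply, Finset.mul_sum]
  rw [Finset.sum_congr rfl (fun m _ => key m)]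
  by_cases hs : (s : ℕ) ≤ (n : ℕ)
  · rw [conv_sum (s : ℕ) (n : ℕ) hs n.isLt (fun u v => (f u * g v) i j)]
    simp only [hs, if_true]
    rw [Matrix.sum_apply]
  · rw [if_neg hs]
    apply Finset.sum_eq_zero
    intro m _
    rw [if_neg]
    omega

lemma lttForm_blockdiag {N a b : ℕ} (P : Matrix (Fin a) (Fin b) ℂ) :
    LTTForm (blockdiag N P) (fun k => if k = 0 then P else 0) := by
  intro n s i j
  unfold blockdiag
  by_cases h : n = s
  · subst h
    simp
  · have h1 : ¬ ((n : Fin N) , i).1 = (s, j).1 := by simpa using h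
    by_cases h2 : (s : ℕ) ≤ (n : ℕ)
    · have : (n : ℕ) - (s : ℕ) ≠ 0 := by
        have : (n : ℕ) ≠ (s : ℕ) := fun hc => h (Fin.ext hc)
        omega
      simp [h1, h2, this]
    · simp [h1, h2]

lemma lttForm_smul_one {N a : ℕ} (α : ℂ) :
    LTTForm (α • (1 : Matrix (Fin N × Fin a) (Fin N × Fin a) ℂ))
      (fun k => if k = 0 then α • (1 : Matrix (Fin a) (Fin a) ℂ) else 0) := by
  intro n s i j
  simp only [Matrix.smul_apply, Matrix.one_apply, smul_eq_mul]
  by_cases h : n = s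
  · subst h
    by_cases hij : i = j
    · subst hij; simp [Matrix.one_apply]
    · simp [Matrix.one_apply, hij, Prod.ext_iff]
  · have h1 : ((n : Fin N), i) ≠ (s, j) := by simp [Prod.ext_iff, h]
    by_cases h2 : (s : ℕ) ≤ (n : ℕ)
    · have : (n : ℕ) - (s : ℕ) ≠ 0 := by
        have : (n : ℕ) ≠ (s : ℕ) := fun hc => h (Fin.ext hc)
        omega
      simp [h1, h2, this]
    · simp [h1, h2]

lemma LTTForm.add {N a b : ℕ} {X Y : Matrix (Fin N × Fin a) (Fin N × Fin b) ℂ}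
    {f g : ℕ → Matrix (Fin a) (Fin b) ℂ}
    (hX : LTTForm X f) (hY : LTTForm Y g) : LTTForm (X + Y) (fun k => f k + g k) := by
  intro n s i j
  by_cases h : (s : ℕ) ≤ (n : ℕ) <;> simp [hX n s, hY n s, h]

lemma lttForm_of_lt_toeplitz {N a b : ℕ} (hN : 0 < N)
    {X : Matrix (Fin N × Fin a) (Fin N × Fin b) ℂ}
    (h1 : IsBlockLowerTriangular X) (h2 : IsBlockToeplitz X) :
    LTTForm X (fun k => if h : k < N
      then Matrix.of (fun i j => X (⟨k, h⟩, i) (⟨0, hN⟩, j)) else 0) := by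
  have main : ∀ (k : ℕ) (n s : Fin N) (i : Fin a) (j : Fin b), (s : ℕ) = k →
      (s : ℕ) ≤ (n : ℕ) →
      X (n, i) (s, j) = X (⟨(n : ℕ) - s, Nat.lt_of_le_of_lt (Nat.sub_le _ _) n.isLt⟩, i)
        (⟨0, hN⟩, j) := by
    intro k
    induction k with
    | zero =>
      intro n s i j hs _
      have hs0 : s = ⟨0, hN⟩ := Fin.ext hs
      subst hs0
      congr 1
    | succ k ih =>
      intro n s i j hs hsn
      have h1n : 1 ≤ (n : ℕ) := by omega
      have h1s : 1 ≤ (s : ℕ) := by omega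
      rw [h2 n s i j h1n h1s]
      have := ih ⟨(n : ℕ) - 1, Nat.lt_of_le_of_lt (Nat.sub_le _ _) n.isLt⟩
        ⟨(s : ℕ) - 1, Nat.lt_of_le_of_lt (Nat.sub_le _ _) s.isLt⟩ i j (by simp; omega)
        (by simp; omega)
      rw [this]
      congr 2 <;> simp <;> omega
  intro n s i j
  by_cases hs : (s : ℕ) ≤ (n : ℕ)
  · have hlt : (n : ℕ) - (s : ℕ) < N := Nat.lt_of_le_of_lt (Nat.sub_le _ _) n.isLt
    rw [main (s : ℕ) n s i j rfl hs]
    simp [hs, hlt]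
  · rw [if_neg hs, h1 n s i j (by exact Fin.lt_def.mpr (by omega))]

/-- Inverse block sequence: the blocks of the inverse of a block lower
triangular block Toeplitz matrix whose diagonal block is `f 0`. -/
noncomputable def ginv {d : ℕ} (f : ℕ → Matrix (Fin d) (Fin d) ℂ) :
    ℕ → Matrix (Fin d) (Fin d) ℂ
  | 0 => (f 0)⁻¹
  | (k + 1) => -((f 0)⁻¹ * ∑ t : Fin (k + 1), f (k + 1 - (t : ℕ)) * ginv f (t : ℕ))
  decreasing_by exact t.isLt

lemma ginv_conv {d : ℕ} (f : ℕ → Matrix (Fin d) (Fin d) ℂ)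
    (hf : f 0 * (f 0)⁻¹ = 1) (k : ℕ) :
    ∑ t ∈ Finset.range (k + 1), f (k - t) * ginv f t
      = if k = 0 then (1 : Matrix (Fin d) (Fin d) ℂ) else 0 := by
  cases k with
  | zero => simp [ginv, hf]
  | succ k =>
    rw [Finset.sum_range_succ, if_neg (Nat.succ_ne_zero k)]
    have hlast : f (k + 1 - (k + 1)) * ginv f (k + 1)
        = -(∑ t ∈ Finset.range (k + 1), f (k + 1 - t) * ginv f t) := by
      rw [Nat.sub_self]
      show f 0 * ginv f (k + 1) = _
      rw [ginv]
      rw [mul_neg, ← Matrix.mul_assoc, hf, Matrix.one_mul]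
      congr 1
      rw [Fin.sum_univ_eq_sum_range (fun t => f (k + 1 - t) * ginv f t)]
    rw [hlast]
    exact add_neg_cancel _

lemma lttForm_one {N a : ℕ} :
    LTTForm (1 : Matrix (Fin N × Fin a) (Fin N × Fin a) ℂ)
      (fun k => if k = 0 then (1 : Matrix (Fin a) (Fin a) ℂ) else 0) := by
  have := lttForm_smul_one (N := N) (a := a) (1 : ℂ)
  simpa using this

lemma lttForm_inv {N d : ℕ} (hN : 0 < N) {G : Matrix (Fin N × Fin d) (Fin N × Fin d) ℂ}
    {f : ℕ → Matrix (Fin d) (Fin d) ℂ} (hG : LTTForm G f) (hU : IsUnit G) :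
    LTTForm G⁻¹ (ginv f) := by
  classical
  have hdet : IsUnit G.det := (Matrix.isUnit_iff_isUnit_det G).mp hU
  -- the diagonal block `f 0` is invertible
  have hker : ∀ v : Fin d → ℂ, (f 0).mulVec v = 0 → v = 0 := by
    intro v hv
    set last : Fin N := ⟨N - 1, by omega⟩ with hlast
    set V : Fin N × Fin d → ℂ := fun p => if p.1 = last then v p.2 else 0 with hV
    have hGV : G.mulVec V = 0 := by
      funext p
      obtain ⟨n, i⟩ := p
      rw [Matrix.mulVec]
      show ∑ q : Fin N × Fin d, G (n, i) q * V q = 0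
      rw [Fintype.sum_prod_type]
      apply Finset.sum_eq_zero
      intro m _
      by_cases hm : m = last
      · subst hm
        by_cases hn : (last : Fin N) ≤ n
        · have hnl : n = last := by
            apply Fin.ext
            have h1 := Fin.le_def.mp hn
            have h2 : (n : ℕ) < N := n.isLt
            have h3 : (last : ℕ) = N - 1 := rfl
            omega
          rw [hnl]
          have hblock : ∀ j, G (last, i) (last, j) = f 0 i j := by
            intro j
            rw [hG last last i j]
            simp
          calc ∑ j, G (last, i) (last, j) * V (last, j)
              = ∑ j, f 0 i j * v j := by
                apply Finset.sum_congr rfl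
                intro j _
                rw [hblock j, hV]
                simp
            _ = (f 0).mulVec v i := rfl
            _ = 0 := by rw [hv]; rfl
        · apply Finset.sum_eq_zero
          intro j _
          rw [hG n last i j, if_neg (fun hc => hn (Fin.le_def.mpr hc))]
          ring
      · apply Finset.sum_eq_zero
        intro j _
        rw [hV]
        simp [hm]
    have hV0 : V = 0 := by
      have := congrArg (fun W => G⁻¹.mulVec W) hGV
      simpa [Matrix.mulVec_mulVec, Matrix.nonsing_inv_mul G hdet] using this
    funext i
    have := congrFun hV0 (last, i)
    simpa [hV] using this
  have hf0 : IsUnit (f 0).det := by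
    rw [← Matrix.isUnit_iff_isUnit_det]
    rw [← Matrix.mulVec_injective_iff_isUnit]
    intro v w h
    have : (f 0).mulVec (v - w) = 0 := by
      rw [Matrix.mulVec_sub, h, sub_self]
    have := hker _ this
    exact sub_eq_zero.mp this
  -- explicit right inverse
  set H : Matrix (Fin N × Fin d) (Fin N × Fin d) ℂ :=
    fun p q => if (q.1 : ℕ) ≤ (p.1 : ℕ) then ginv f ((p.1 : ℕ) - q.1) p.2 q.2 else 0
    with hHdef
  have hH : LTTForm H (ginv f) := fun n s i j => rfl
  have hGH : G * H = 1 := by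
    have hmul := hG.mul hH
    funext p q
    obtain ⟨n, i⟩ := p
    obtain ⟨s, j⟩ := q
    show (G * H) (n, i) (s, j) = (1 : Matrix (Fin N × Fin d) (Fin N × Fin d) ℂ) (n, i) (s, j)
    rw [hmul n s i j, lttForm_one n s i j]
    by_cases hs : (s : ℕ) ≤ (n : ℕ)
    · rw [if_pos hs, if_pos hs]
      show (∑ t ∈ Finset.range ((n : ℕ) - s + 1), f ((n : ℕ) - s - t) * ginv f t) i j
        = (if (n : ℕ) - s = 0 then (1 : Matrix (Fin d) (Fin d) ℂ) else 0) i j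
      rw [ginv_conv f (Matrix.mul_nonsing_inv _ hf0)]
    · rw [if_neg hs, if_neg hs]
  have : G⁻¹ = H := Matrix.inv_eq_right_inv hGH
  rw [this]
  exact hH


/-- Sandwich lemma: if `G` is block lower triangular, block Toeplitz and
invertible and `S` is block lower triangular and block Toeplitz, then
`X = α I + blockdiag(P) S G⁻¹ blockdiag(M) blockdiag(R)` is block lower
triangular and satisfies `x_{n,s} = x_{n-1,s-1}` for all `2 ≤ s ≤ n ≤ N`
(here 0-based: `1 ≤ s ≤ n`). -/
theorem sandwich_blockLT_toeplitz (N a d : ℕ)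
    (hN : 1 ≤ N) (ha : 1 ≤ a) (hd : 1 ≤ d) (α : ℂ)
    (G S : Matrix (Fin N × Fin d) (Fin N × Fin d) ℂ)
    (hG₁ : IsBlockLowerTriangular G) (hG₂ : IsBlockToeplitz G) (hG₃ : IsUnit G)
    (hS₁ : IsBlockLowerTriangular S) (hS₂ : IsBlockToeplitz S)
    (P : Matrix (Fin a) (Fin d) ℂ) (M : Matrix (Fin d) (Fin d) ℂ)
    (R : Matrix (Fin d) (Fin a) ℂ) :
    IsBlockLowerTriangular
      (α • (1 : Matrix (Fin N × Fin a) (Fin N × Fin a) ℂ)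
        + blockdiag N P * S * G⁻¹ * blockdiag N M * blockdiag N R)
    ∧ ∀ (n s : Fin N) (i j : Fin a), 1 ≤ (s : ℕ) → s ≤ n →
        (α • (1 : Matrix (Fin N × Fin a) (Fin N × Fin a) ℂ)
          + blockdiag N P * S * G⁻¹ * blockdiag N M * blockdiag N R) (n, i) (s, j)
        = (α • (1 : Matrix (Fin N × Fin a) (Fin N × Fin a) ℂ)
            + blockdiag N P * S * G⁻¹ * blockdiag N M * blockdiag N R)
            (⟨(n : ℕ) - 1, Nat.lt_of_le_of_lt (Nat.sub_le _ _) n.isLt⟩, i)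
            (⟨(s : ℕ) - 1, Nat.lt_of_le_of_lt (Nat.sub_le _ _) s.isLt⟩, j) := by
  have hN' : 0 < N := hN
  have hSf := lttForm_of_lt_toeplitz hN' hS₁ hS₂
  have hGf := lttForm_of_lt_toeplitz hN' hG₁ hG₂
  have hGinv := lttForm_inv hN' hGf hG₃
  have hB := ((((lttForm_blockdiag P).mul hSf).mul hGinv).mul
    (lttForm_blockdiag M)).mul (lttForm_blockdiag R)
  have hX := (lttForm_smul_one α).add hB
  constructor
  · intro n s i j hlt
    rw [hX n s i j, if_neg]
    have := Fin.lt_def.mp hlt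
    omega
  · intro n s i j hs1 hsn
    have hsn' : (s : ℕ) ≤ (n : ℕ) := Fin.le_def.mp hsn
    rw [hX n s i j]
    rw [hX ⟨(n : ℕ) - 1, Nat.lt_of_le_of_lt (Nat.sub_le _ _) n.isLt⟩
      ⟨(s : ℕ) - 1, Nat.lt_of_le_of_lt (Nat.sub_le _ _) s.isLt⟩ i j]
    rw [if_pos hsn', if_pos (by simp; omega)]
    congr 1
    simp
    omega
end
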